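/- Let Γ be the random bipartite graph. Suppose h ∈ F(S_{l,r}(Γ)), and T, U ⊂ dom(h) are two disjoint finite bipartite subgraphs with U containing at least one vertex on each side, such that for every cross-edge E of T ∪ U not contained in T, h↾E is an isomorphism. Then h↾T is an isomorphism (i.e., h preserves the cross-type of every cross-edge in T). -/

import Mathlib

/-! Preamble: bipartite graphs, the random bipartite graph, side-preserving
permutation groups, switches, switch groups, and related notions. -/

/-- A bipartite graph on a vertex type `V`: the sides `left` and `right`
partition `V`, both sides are nonempty, and `adj` (the relation `P₁`) only holds
from `left` to `right`.  The relation `P₂` is the complement of `adj` on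
`left × right`. -/
structure BipartiteGraph (V : Type*) where
  left : Set V
  right : Set V
  adj : V → V → Prop
  left_nonempty : left.Nonempty
  right_nonempty : right.Nonempty
  union_eq : left ∪ right = Set.univ
  disjoint_sides : Disjoint left right
  adj_dom : ∀ a b, adj a b → a ∈ left ∧ b ∈ right

/-- The two sides of a bipartite graph. -/
inductive BSide : Type
  | l : BSide
  | r : BSide
deriving DecidableEq

namespace BipartiteGraph

variable {V : Type*} (Γ : BipartiteGraph V)

/-- The side of the graph indexed by an element of `BSide`. -/
def side : BSide → Set V
  | BSide.l => Γ.left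
  | BSide.r => Γ.right

/-- `Γ` is (isomorphic to) the random bipartite graph: it is countable, both
sides are infinite, and it satisfies the extension properties `Θₙ` for all `n`. -/
structure IsRandom : Prop where
  countable : Countable V
  left_infinite : Γ.left.Infinite
  right_infinite : Γ.right.Infinite
  ext_left : ∀ X₁ X₂ : Finset V, ↑X₁ ⊆ Γ.left → ↑X₂ ⊆ Γ.left → Disjoint X₁ X₂ →
      ∃ v ∈ Γ.right, (∀ x ∈ X₁, Γ.adj x v) ∧ (∀ x ∈ X₂, ¬ Γ.adj x v)
  ext_right : ∀ X₁ X₂ : Finset V, ↑X₁ ⊆ Γ.right → ↑X₂ ⊆ Γ.right → Disjoint X₁ X₂ →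
      ∃ v ∈ Γ.left, (∀ x ∈ X₁, Γ.adj v x) ∧ (∀ x ∈ X₂, ¬ Γ.adj v x)

/-- `Sym_{l,r}(Γ)`: the group of permutations of `V` preserving both sides. -/
def symLR : Subgroup (Equiv.Perm V) where
  carrier := {g | (∀ v, g v ∈ Γ.left ↔ v ∈ Γ.left) ∧ (∀ v, g v ∈ Γ.right ↔ v ∈ Γ.right)}
  one_mem' := ⟨fun _ => Iff.rfl, fun _ => Iff.rfl⟩
  mul_mem' := by
    rintro a b ⟨hal, har⟩ ⟨hbl, hbr⟩
    exact ⟨fun v => (hal (b v)).trans (hbl v), fun v => (har (b v)).trans (hbr v)⟩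
  inv_mem' := by
    rintro a ⟨hal, har⟩
    refine ⟨fun v => ?_, fun v => ?_⟩
    · have h := hal (a⁻¹ v); rw [show ∀ w, a (a⁻¹ w) = w from fun w => a.apply_symm_apply w] at h; exact h.symm
    · have h := har (a⁻¹ v); rw [show ∀ w, a (a⁻¹ w) = w from fun w => a.apply_symm_apply w] at h; exact h.symm

/-- The automorphism group of `Γ`: side-preserving permutations preserving `adj`
(and hence both cross-types). -/
def autGroup : Subgroup (Equiv.Perm V) where
  carrier := {g | g ∈ Γ.symLR ∧ ∀ a b, Γ.adj a b ↔ Γ.adj (g a) (g b)}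
  one_mem' := ⟨Γ.symLR.one_mem, fun _ _ => Iff.rfl⟩
  mul_mem' := by
    rintro a b ⟨ha, ha2⟩ ⟨hb, hb2⟩
    exact ⟨mul_mem ha hb, fun x y => (hb2 x y).trans (ha2 (b x) (b y))⟩
  inv_mem' := by
    rintro a ⟨ha, ha2⟩
    refine ⟨inv_mem ha, fun x y => ?_⟩
    have h := ha2 (a⁻¹ x) (a⁻¹ y)
    rw [show ∀ w, a (a⁻¹ w) = w from fun w => a.apply_symm_apply w, show ∀ w, a (a⁻¹ w) = w from fun w => a.apply_symm_apply w] at h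
    exact h.symm

/-- A permutation `g` is a switch with respect to a set `A` if it preserves the
sides and, for every cross-edge `(a, b)`, the cross-type of `(a, b)` is preserved
if and only if `|{a, b} ∩ A| ≠ 1`. -/
def IsSwitch (g : Equiv.Perm V) (A : Set V) : Prop :=
  g ∈ Γ.symLR ∧ ∀ a ∈ Γ.left, ∀ b ∈ Γ.right,
    ((Γ.adj a b ↔ Γ.adj (g a) (g b)) ↔ ({a, b} ∩ A : Set V).ncard ≠ 1)

/-- The restriction of a map `g` to a set `S` is a switch with respect to `A`:
the condition of `IsSwitch` holds for all cross-edges inside `S`. -/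
def IsSwitchOn (g : V → V) (S : Set V) (A : Set V) : Prop :=
  ∀ a ∈ S ∩ Γ.left, ∀ b ∈ S ∩ Γ.right,
    ((Γ.adj a b ↔ Γ.adj (g a) (g b)) ↔ ({a, b} ∩ A : Set V).ncard ≠ 1)

/-- The restriction of a map `g` to a set `S` is an isomorphism: `g` preserves
the cross-type of every cross-edge inside `S`. -/
def IsIsoOn (g : V → V) (S : Set V) : Prop :=
  ∀ a ∈ S ∩ Γ.left, ∀ b ∈ S ∩ Γ.right, (Γ.adj a b ↔ Γ.adj (g a) (g b))

end BipartiteGraph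

/-- A subgroup of the full symmetric group is closed (in the topology of
pointwise convergence) iff it contains every permutation which agrees with some
member of the subgroup on each finite subset. -/
def IsClosedSubgroup {V : Type*} (G : Subgroup (Equiv.Perm V)) : Prop :=
  ∀ g : Equiv.Perm V, (∀ F : Finset V, ∃ h ∈ G, ∀ x ∈ F, h x = g x) → g ∈ G

/-- The closed subgroup generated by a set of permutations: the intersection of
all closed subgroups containing the set. -/
def closedClosure {V : Type*} (S : Set (Equiv.Perm V)) : Subgroup (Equiv.Perm V) :=
  sInf {G : Subgroup (Equiv.Perm V) | IsClosedSubgroup G ∧ S ⊆ ↑G}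

namespace BipartiteGraph

variable {V : Type*} (Γ : BipartiteGraph V)

/-- The switch group `S_X(Γ)`: the closed subgroup of `Sym_{l,r}(Γ)` generated
by `Aut(Γ)` together with all switches with respect to a single vertex `v ∈ R_i`
for `i ∈ X`. -/
def switchGroup (X : Set BSide) : Subgroup (Equiv.Perm V) :=
  closedClosure ((Γ.autGroup : Set (Equiv.Perm V)) ∪
    {g | ∃ i ∈ X, ∃ v ∈ Γ.side i, Γ.IsSwitch g {v}})

/-- The group `S_X(Γ)* `: the closed subgroup generated by `S_X(Γ)` together with
a switch `ρ` with respect to the whole side `R_l`. -/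
def switchGroupStar (X : Set BSide) : Subgroup (Equiv.Perm V) :=
  closedClosure ((Γ.switchGroup X : Set (Equiv.Perm V)) ∪ {g | Γ.IsSwitch g Γ.left})

/-- Membership in `Aut(Γ)*`, the group of side-preserving permutations which
either preserve all cross-types on `R_l × R_r` or exchange all cross-types on
`R_l × R_r`. -/
def InAutStar (g : Equiv.Perm V) : Prop :=
  g ∈ Γ.symLR ∧
    ((∀ a ∈ Γ.left, ∀ b ∈ Γ.right, (Γ.adj a b ↔ Γ.adj (g a) (g b))) ∨
     (∀ a ∈ Γ.left, ∀ b ∈ Γ.right, (Γ.adj a b ↔ ¬ Γ.adj (g a) (g b))))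

/-- The number of cross-edges of cross-type `P₁` inside the set `S`. -/
noncomputable def edgeCount (S : Set V) : ℕ :=
  {p : V × V | p.1 ∈ S ∧ p.2 ∈ S ∧ Γ.adj p.1 p.2}.ncard

/-- `g` preserves the parity of cross-types on `S`: the number of `P₁`
cross-edges in `S` is even iff the number of `P₁` cross-edges in `g[S]` is even. -/
def PreservesParityOn (g : V → V) (S : Set V) : Prop :=
  Even (Γ.edgeCount S) ↔ Even (Γ.edgeCount (g '' S))

/-- An `(m × n)`-subgraph of `Γ`: a finite set of vertices with `m` vertices on
the left side and `n` vertices on the right side. -/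
def IsMNSubgraph (S : Set V) (m n : ℕ) : Prop :=
  S.Finite ∧ (S ∩ Γ.left).ncard = m ∧ (S ∩ Γ.right).ncard = n

end BipartiteGraph

/-!
Every generator of `S_{l,r}(Γ)` changes the cross-type of exactly the cross-edges in a set of the
form `(A × R_r) Δ (R_l × B)`. This is a condition on four vertices at a time, so it survives
products, inverses and pointwise limits, and holds for all of `S_{l,r}(Γ)`. For such `h`, whether
`h` flips `(a, b)` is decided by whether it flips `(u, b)`, `(a, w)` and `(u, w)`; choosing `u` and
`w` in `U` makes all three unflipped.
-/

lemma Set.ncard_inter_singleton_eq_one_iff {α : Type*} (s : Set α) (v : α) :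
    (s ∩ {v}).ncard = 1 ↔ v ∈ s := by
  by_cases hv : v ∈ s
  · simp [Set.inter_singleton_of_mem hv, hv]
  · simp [Set.inter_singleton_eq_empty.mpr hv, hv]

theorem iff_iff_iff_comm {a b c d : Prop} : ((a ↔ b) ↔ (c ↔ d)) ↔ ((a ↔ c) ↔ (b ↔ d)) := by
  tauto

namespace BipartiteGraph

variable {V : Type*} (Γ : BipartiteGraph V)

def PreservesAdj (g : V → V) (a b : V) : Prop :=
  Γ.adj a b ↔ Γ.adj (g a) (g b)

/-- Over `𝔽₂`, the four-point condition says that the indicator of the cross-edges whose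
cross-type `g` changes is `α(a) + β(b)` for some `α : R_l → 𝔽₂`, `β : R_r → 𝔽₂`. -/
def HasSeparableFlips (g : V → V) : Prop :=
  ∀ a ∈ Γ.left, ∀ a' ∈ Γ.left, ∀ b ∈ Γ.right, ∀ b' ∈ Γ.right,
    ((Γ.PreservesAdj g a b ↔ Γ.PreservesAdj g a' b) ↔
      (Γ.PreservesAdj g a b' ↔ Γ.PreservesAdj g a' b'))

lemma preservesAdj_mul (g k : Equiv.Perm V) (u v : V) :
    Γ.PreservesAdj ⇑(g * k) u v ↔ (Γ.PreservesAdj k u v ↔ Γ.PreservesAdj g (k u) (k v)) := by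
  simp only [PreservesAdj, Equiv.Perm.mul_apply]
  tauto

lemma preservesAdj_inv (g : Equiv.Perm V) (u v : V) :
    Γ.PreservesAdj ⇑g⁻¹ u v ↔ Γ.PreservesAdj g (g⁻¹ u) (g⁻¹ v) := by
  simp only [PreservesAdj, Equiv.Perm.coe_inv, Equiv.apply_symm_apply]
  exact Iff.comm

variable {Γ} in
lemma HasSeparableFlips.preservesAdj {g : V → V} (hg : Γ.HasSeparableFlips g)
    {a a' b b' : V} (ha : a ∈ Γ.left) (ha' : a' ∈ Γ.left) (hb : b ∈ Γ.right) (hb' : b' ∈ Γ.right)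
    (h₁ : Γ.PreservesAdj g a' b) (h₂ : Γ.PreservesAdj g a b') (h₃ : Γ.PreservesAdj g a' b') :
    Γ.PreservesAdj g a b := by
  have := hg a ha a' ha' b hb b' hb'
  tauto

lemma hasSeparableFlips_of_mem_autGroup {g : Equiv.Perm V} (hg : g ∈ Γ.autGroup) :
    Γ.HasSeparableFlips g := by
  intro a _ a' _ b _ b' _
  simp only [PreservesAdj, ← hg.2, iff_self]

variable {Γ} in
lemma IsSwitch.hasSeparableFlips {g : Equiv.Perm V} {v : V} (hg : Γ.IsSwitch g {v}) :
    Γ.HasSeparableFlips g := by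
  have hpres : ∀ x ∈ Γ.left, ∀ y ∈ Γ.right, Γ.PreservesAdj g x y ↔ x ≠ v ∧ y ≠ v := by
    intro x hx y hy
    rw [PreservesAdj, hg.2 x hx y hy, Ne, Set.ncard_inter_singleton_eq_one_iff]
    simp [eq_comm]
  intro a ha a' ha' b hb b' hb'
  rw [hpres a ha b hb, hpres a' ha' b hb, hpres a ha b' hb', hpres a' ha' b' hb']
  -- `v` lies on one side only, so it cannot be both one of the `a`s and one of the `b`s
  rcases Set.eq_univ_iff_forall.mp Γ.union_eq v with hv | hv
  · have : b ≠ v ∧ b' ≠ v := ⟨Γ.disjoint_sides.ne_of_mem hv hb ∘ Eq.symm,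
      Γ.disjoint_sides.ne_of_mem hv hb' ∘ Eq.symm⟩
    tauto
  · have : a ≠ v ∧ a' ≠ v := ⟨Γ.disjoint_sides.ne_of_mem ha hv, Γ.disjoint_sides.ne_of_mem ha' hv⟩
    tauto

def separableFlipsSubgroup : Subgroup (Equiv.Perm V) where
  carrier := {g | g ∈ Γ.symLR ∧ Γ.HasSeparableFlips g}
  one_mem' := ⟨Γ.symLR.one_mem, Γ.hasSeparableFlips_of_mem_autGroup Γ.autGroup.one_mem⟩
  mul_mem' := by
    rintro g k ⟨hgLR, hg⟩ ⟨hkLR, hk⟩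
    refine ⟨mul_mem hgLR hkLR, fun a ha a' ha' b hb b' hb' => ?_⟩
    have hk₄ := hk a ha a' ha' b hb b' hb'
    have hg₄ := hg (k a) ((hkLR.1 a).2 ha) (k a') ((hkLR.1 a').2 ha')
      (k b) ((hkLR.2 b).2 hb) (k b') ((hkLR.2 b').2 hb')
    simp only [preservesAdj_mul]
    -- regroup the eight-term biconditional into the four-point conditions for `k` and for `g`
    rw [iff_iff_iff_comm (a := Γ.PreservesAdj k a b), iff_iff_iff_comm (a := Γ.PreservesAdj k a b'),
      iff_iff_iff_comm (a := Γ.PreservesAdj k a b ↔ _)]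
    exact iff_of_true hk₄ hg₄
  inv_mem' := by
    rintro g ⟨hgLR, hg⟩
    have hiLR := inv_mem hgLR
    refine ⟨hiLR, fun a ha a' ha' b hb b' hb' => ?_⟩
    simp only [preservesAdj_inv]
    exact hg _ ((hiLR.1 a).2 ha) _ ((hiLR.1 a').2 ha') _ ((hiLR.2 b).2 hb) _ ((hiLR.2 b').2 hb')

lemma isClosedSubgroup_separableFlipsSubgroup : IsClosedSubgroup Γ.separableFlipsSubgroup := by
  classical
  intro g hg
  refine ⟨⟨fun v => ?_, fun v => ?_⟩, fun a ha a' ha' b hb b' hb' => ?_⟩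
  · obtain ⟨k, hk, hkg⟩ := hg {v}
    simpa [hkg v (by simp)] using hk.1.1 v
  · obtain ⟨k, hk, hkg⟩ := hg {v}
    simpa [hkg v (by simp)] using hk.1.2 v
  · obtain ⟨k, hk, hkg⟩ := hg {a, a', b, b'}
    simpa only [PreservesAdj, hkg a (by simp), hkg a' (by simp), hkg b (by simp),
      hkg b' (by simp)] using hk.2 a ha a' ha' b hb b' hb'

lemma switchGroup_le_separableFlipsSubgroup (X : Set BSide) :
    Γ.switchGroup X ≤ Γ.separableFlipsSubgroup := by
  refine sInf_le ⟨Γ.isClosedSubgroup_separableFlipsSubgroup, ?_⟩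
  rintro g (hg | ⟨_, _, _, _, hsw⟩)
  · exact ⟨hg.1, Γ.hasSeparableFlips_of_mem_autGroup hg⟩
  · exact ⟨hsw.1, hsw.hasSeparableFlips⟩

end BipartiteGraph

theorem isIsoOn_of_isIsoOn_outside_general {V : Type*} (Γ : BipartiteGraph V)
    (h : Equiv.Perm V) (hmem : h ∈ Γ.switchGroup {BSide.l, BSide.r})
    (T U : Finset V) (hdisj : Disjoint T U)
    (hUl : ((U : Set V) ∩ Γ.left).Nonempty) (hUr : ((U : Set V) ∩ Γ.right).Nonempty)
    (hout : ∀ a ∈ ((T : Set V) ∪ (U : Set V)) ∩ Γ.left,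
      ∀ b ∈ ((T : Set V) ∪ (U : Set V)) ∩ Γ.right,
      ¬(a ∈ (T : Set V) ∧ b ∈ (T : Set V)) → (Γ.adj a b ↔ Γ.adj (h a) (h b))) :
    Γ.IsIsoOn (⇑h) (T : Set V) := by
  obtain ⟨u, huU, hul⟩ := hUl
  obtain ⟨w, hwU, hwr⟩ := hUr
  have hu : u ∉ T := Finset.disjoint_right.mp hdisj huU
  have hw : w ∉ T := Finset.disjoint_right.mp hdisj hwU
  rintro a ⟨haT, hal⟩ b ⟨hbT, hbr⟩
  exact (Γ.switchGroup_le_separableFlipsSubgroup _ hmem).2.preservesAdj hal hul hbr hwr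
    (hout u ⟨.inr huU, hul⟩ b ⟨.inl hbT, hbr⟩ fun huT => hu huT.1)
    (hout a ⟨.inl haT, hal⟩ w ⟨.inr hwU, hwr⟩ fun hwT => hw hwT.2)
    (hout u ⟨.inr huU, hul⟩ w ⟨.inr hwU, hwr⟩ fun huT => hu huT.1)

/-- **Lemma 5.3.** Suppose `h ∈ F(S_{l,r}(Γ))` (here represented by a member
`h` of `S_{l,r}(Γ)` restricted to the finite set `T ∪ U`), and `T`, `U` are two
disjoint finite bipartite subgraphs, `U` containing at least one vertex on each
side, such that `h` preserves the cross-type of every cross-edge of `T ∪ U` not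
contained in `T`.  Then `h ↾ T` is an isomorphism. -/
theorem isIsoOn_of_isIsoOn_outside {V : Type*} (Γ : BipartiteGraph V)
    (hΓ : Γ.IsRandom) (h : Equiv.Perm V) (hmem : h ∈ Γ.switchGroup {BSide.l, BSide.r})
    (T U : Finset V) (hdisj : Disjoint T U)
    (hTl : ((T : Set V) ∩ Γ.left).Nonempty) (hTr : ((T : Set V) ∩ Γ.right).Nonempty)
    (hUl : ((U : Set V) ∩ Γ.left).Nonempty) (hUr : ((U : Set V) ∩ Γ.right).Nonempty)
    (hout : ∀ a ∈ ((T : Set V) ∪ (U : Set V)) ∩ Γ.left,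
      ∀ b ∈ ((T : Set V) ∪ (U : Set V)) ∩ Γ.right,
      ¬(a ∈ (T : Set V) ∧ b ∈ (T : Set V)) → (Γ.adj a b ↔ Γ.adj (h a) (h b))) :
    Γ.IsIsoOn (⇑h) (T : Set V) :=
  isIsoOn_of_isIsoOn_outside_general Γ h hmem T U hdisj hUl hUr hout
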